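/- For each N ≥ 6, the vector fields T(f) = f ∂_{t_N} + (1/N) f′ (x∂_x + 2y∂_y) − (1/N) w f′ ∂_w on ℝ⁴ (coordinates x, y, t_N, w), parametrized by smooth functions f of t_N, satisfy [T(f₁), T(f₂)] = T(f₁f₂′ − f₁′f₂) and thus form a centerless Virasoro algebra. -/

import Mathlib

/-!  **Statement 16.**  For each `N ≥ 6`, the vector fields
`T(f) = f∂_{t_N} + (1/N)f′(x∂_x + 2y∂_y) − (1/N)wf′∂_w` on `ℝ⁴`
(coordinates `(x, y, t_N, w) = (p 0, p 1, p 2, p 3)`), parametrized by smooth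
functions `f` of `t_N`, satisfy `[T(f₁), T(f₂)] = T(f₁f₂′ − f₁′f₂)` and thus
form a centerless Virasoro algebra. -/

noncomputable section

abbrev E4 := Fin 4 → ℝ

/-- Commutator of vector fields on `ℝ⁴`. -/
def vbracket (V W : E4 → E4) : E4 → E4 :=
  fun p => fderiv ℝ W p (V p) - fderiv ℝ V p (W p)

/-- `T(f) = f∂_{t_N} + (1/N)f′(x∂_x + 2y∂_y) − (1/N)wf′∂_w`. -/
def TN (N : ℕ) (f : ℝ → ℝ) : E4 → E4 := fun p =>
  ![(1 / (N : ℝ)) * deriv f (p 2) * p 0,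
    (2 / (N : ℝ)) * deriv f (p 2) * p 1,
    f (p 2),
    -(1 / (N : ℝ)) * p 3 * deriv f (p 2)]


open ContinuousLinearMap in
lemma comp2_aux {f : ℝ → ℝ} (hf : Differentiable ℝ f) (p : E4) :
    HasFDerivAt (fun q : E4 => f (q 2)) (deriv f (p 2) • (proj 2 : E4 →L[ℝ] ℝ)) p :=
  HasDerivAt.comp_hasFDerivAt p (hf (p 2)).hasDerivAt (proj 2 : E4 →L[ℝ] ℝ).hasFDerivAt

open ContinuousLinearMap in
lemma hasFDerivAt_TN (N : ℕ) {f : ℝ → ℝ} (hf : ContDiff ℝ (⊤ : ℕ∞) f) (p : E4) :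
    HasFDerivAt (TN N f) (ContinuousLinearMap.pi
      ![(1/(N:ℝ) * deriv f (p 2)) • (proj 0 : E4 →L[ℝ] ℝ)
          + p 0 • ((1/(N:ℝ)) • (deriv (deriv f) (p 2) • (proj 2 : E4 →L[ℝ] ℝ))),
        (2/(N:ℝ) * deriv f (p 2)) • (proj 1 : E4 →L[ℝ] ℝ)
          + p 1 • ((2/(N:ℝ)) • (deriv (deriv f) (p 2) • (proj 2 : E4 →L[ℝ] ℝ))),
        deriv f (p 2) • (proj 2 : E4 →L[ℝ] ℝ),
        (-(1/(N:ℝ)) * p 3) • (deriv (deriv f) (p 2) • (proj 2 : E4 →L[ℝ] ℝ))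
          + deriv f (p 2) • ((-(1/(N:ℝ))) • (proj 3 : E4 →L[ℝ] ℝ))]) p := by
  have hf' : Differentiable ℝ f := hf.differentiable (by simp)
  have hg : Differentiable ℝ (deriv f) :=
    ((contDiff_infty_iff_deriv.mp (hf.of_le (by simp))).2).differentiable (by simp)
  rw [hasFDerivAt_pi']
  intro i
  fin_cases i <;>
    simp only [proj_pi, TN, Matrix.cons_val_zero, Matrix.cons_val_one, Matrix.head_cons,
      Matrix.cons_val_two, Matrix.tail_cons, Matrix.cons_val_three, Fin.isValue]
  · exact ((comp2_aux hg p).const_mul (1/(N:ℝ))).mul (proj 0 : E4 →L[ℝ] ℝ).hasFDerivAt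
  · exact ((comp2_aux hg p).const_mul (2/(N:ℝ))).mul (proj 1 : E4 →L[ℝ] ℝ).hasFDerivAt
  · exact comp2_aux hf' p
  · exact (((proj 3 : E4 →L[ℝ] ℝ).hasFDerivAt.const_mul (-(1/(N:ℝ)))).mul (comp2_aux hg p))

/-- For `N ≥ 6`: `[T(f₁), T(f₂)] = T(f₁f₂′ − f₁′f₂)`. -/
theorem virasoro_higher_kp (N : ℕ) (hN : 6 ≤ N) (f₁ f₂ : ℝ → ℝ)
    (h₁ : ContDiff ℝ (⊤ : ℕ∞) f₁) (h₂ : ContDiff ℝ (⊤ : ℕ∞) f₂) :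
    vbracket (TN N f₁) (TN N f₂) =
      TN N (fun t => f₁ t * deriv f₂ t - deriv f₁ t * f₂ t) := by
  have hd₁ : Differentiable ℝ f₁ := h₁.differentiable (by simp)
  have hd₂ : Differentiable ℝ f₂ := h₂.differentiable (by simp)
  have hg₁ : Differentiable ℝ (deriv f₁) :=
    ((contDiff_infty_iff_deriv.mp (h₁.of_le (by simp))).2).differentiable (by simp)
  have hg₂ : Differentiable ℝ (deriv f₂) :=
    ((contDiff_infty_iff_deriv.mp (h₂.of_le (by simp))).2).differentiable (by simp)
  have hder : ∀ t, deriv (fun t => f₁ t * deriv f₂ t - deriv f₁ t * f₂ t) t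
      = f₁ t * deriv (deriv f₂) t - deriv (deriv f₁) t * f₂ t := by
    intro t
    rw [deriv_fun_sub (f := fun y => f₁ y * deriv f₂ y) (g := fun y => deriv f₁ y * f₂ y)
        ((hd₁ t).mul (hg₂ t)) ((hg₁ t).mul (hd₂ t)),
      deriv_fun_mul (hd₁ t) (hg₂ t), deriv_fun_mul (hg₁ t) (hd₂ t)]
    ring
  funext p
  have H1 := hasFDerivAt_TN N h₁ p
  have H2 := hasFDerivAt_TN N h₂ p
  simp only [vbracket, H1.fderiv, H2.fderiv]
  funext i
  fin_cases i <;>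
    simp [TN, hder, ContinuousLinearMap.pi_apply, ContinuousLinearMap.proj_apply] <;>
    ring

end
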